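/- arXiv:1801.09387 — 3 statements merged into one kernel-verified Lean document; each statement's English description precedes it below -/
import Mathlib

section
/- Let f : ℝⁿ → ℝ be twice continuously differentiable with L-Lipschitz Hessian on F. Suppose x ∈ F, x̂ ∈ F satisfies ∇f(x̂) = 0 and ∇²f(x̂) ⪰ 0, and x⁺ satisfies the stationarity condition 0 = ∇f(x) + ∇²f(x)(x⁺ − x) + (σ/2)‖x⁺ − x‖(x⁺ − x) for some σ > 0. Then ‖x⁺ − x‖ ≤ (1 + L/σ + √((1 + L/σ)² + L/σ))·‖x − x̂‖. -/
/-! Write `s = x⁺ - x` and `d = x - x̂`. Stationarity expresses `∇²f(x̂)(s + d)` as `-(σ/2)‖s‖s`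
plus the two Taylor remainders at `x̂`, of sizes `L‖d‖²/2` (gradient) and `L‖d‖‖s‖` (Hessian).
Pairing with `s + d` and using `∇²f(x̂) ⪰ 0` gives the cubic inequality
`‖s‖²(‖s‖ - ‖d‖) ≤ (L/σ)(‖s‖ + ‖d‖)(‖d‖² + 2‖d‖‖s‖)`, which forces `‖s‖ ≤ τ‖d‖` for the
positive root `τ` of `τ² = 2(1 + L/σ)τ + L/σ`. -/

open Set RealInnerProductSpace

theorem norm_sub_sub_fderiv_le_of_lipschitz_fderiv {E F : Type*} [NormedAddCommGroup E]
    [NormedSpace ℝ E] [NormedAddCommGroup F] [NormedSpace ℝ F] {g : E → F} {g' : E → E →L[ℝ] F}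
    {s : Set E} {a b : E} {L : ℝ} (hs : Convex ℝ s) (ha : a ∈ s) (hb : b ∈ s)
    (hg : ∀ y ∈ s, HasFDerivAt g (g' y) y) (hLip : ∀ y ∈ s, ‖g' y - g' a‖ ≤ L * ‖y - a‖) :
    ‖g b - g a - g' a (b - a)‖ ≤ L / 2 * ‖b - a‖ ^ 2 := by
  set γ : ℝ → E := fun t => a + t • (b - a)
  have hγs : ∀ t ∈ Icc (0 : ℝ) 1, γ t ∈ s := fun t ht => hs.add_smul_sub_mem ha hb ht
  have hγ : ∀ t, HasDerivAt γ (b - a) t := fun t => by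
    simpa [γ] using ((hasDerivAt_id t).smul_const (b - a)).const_add a
  set φ : ℝ → F := fun t => g (γ t) - t • g' a (b - a) - g a
  set φ' : ℝ → F := fun t => g' (γ t) (b - a) - g' a (b - a)
  have hφ : ∀ t ∈ Icc (0 : ℝ) 1, HasDerivAt φ (φ' t) t := fun t ht => by
    have := (((hg _ (hγs t ht)).comp_hasDerivAt t (hγ t)).sub
      ((hasDerivAt_id t).smul_const (g' a (b - a)))).sub_const (g a)
    exact this.congr_deriv (by simp [φ'])
  have hφ' : ∀ t ∈ Ico (0 : ℝ) 1, ‖φ' t‖ ≤ L * ‖b - a‖ ^ 2 * t := fun t ht => by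
    have hγa : γ t - a = t • (b - a) := add_sub_cancel_left _ _
    calc ‖φ' t‖ = ‖(g' (γ t) - g' a) (b - a)‖ := rfl
      _ ≤ ‖g' (γ t) - g' a‖ * ‖b - a‖ := ContinuousLinearMap.le_opNorm _ _
      _ ≤ L * ‖γ t - a‖ * ‖b - a‖ := by
        gcongr; exact hLip _ (hγs t (Ico_subset_Icc_self ht))
      _ = L * ‖b - a‖ ^ 2 * t := by
        rw [hγa, norm_smul, Real.norm_of_nonneg ht.1]; ring
  have hB : ∀ t, HasDerivAt (fun t => L * ‖b - a‖ ^ 2 * (t ^ 2 / 2)) (L * ‖b - a‖ ^ 2 * t) t :=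
    fun t => by simpa using ((hasDerivAt_pow 2 t).div_const 2).const_mul (L * ‖b - a‖ ^ 2)
  calc ‖g b - g a - g' a (b - a)‖ = ‖φ 1‖ := by
        simp only [φ, γ, one_smul, add_sub_cancel, sub_right_comm]
    _ ≤ L * ‖b - a‖ ^ 2 * (1 ^ 2 / 2) := image_norm_le_of_norm_deriv_right_le_deriv_boundary
        (fun t ht => (hφ t ht).continuousAt.continuousWithinAt)
        (fun t ht => (hφ t (Ico_subset_Icc_self ht)).hasDerivWithinAt) (by simp [φ, γ]) hB hφ'
        (right_mem_Icc.2 zero_le_one)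
    _ = L / 2 * ‖b - a‖ ^ 2 := by ring

theorem le_mul_of_sq_mul_sub_le {ρ D r : ℝ} (hD : 0 ≤ D) (hr : 0 ≤ r)
    (h : r ^ 2 * (r - D) ≤ ρ * (r + D) * (D ^ 2 + 2 * D * r)) :
    r ≤ (1 + ρ + √((1 + ρ) ^ 2 + ρ)) * D := by
  have hquad : r ^ 2 ≤ 2 * (1 + ρ) * D * r + ρ * D ^ 2 := by
    rcases (add_nonneg hr hD).eq_or_lt with hrD | hrD
    · obtain ⟨rfl, rfl⟩ : r = 0 ∧ D = 0 := ⟨by linarith, by linarith⟩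
      simp
    -- `(r + D) (r² - 2(1 + ρ)Dr - ρD²) = r²(r - D) - ρ(r + D)(D² + 2Dr) - 2D²r`
    · refine le_of_sub_nonpos (nonpos_of_mul_nonpos_right ?_ hrD)
      nlinarith [mul_nonneg (mul_nonneg hD hD) hr]
  have : r - (1 + ρ) * D ≤ √(((1 + ρ) ^ 2 + ρ) * D ^ 2) :=
    (le_abs_self _).trans (Real.abs_le_sqrt (by nlinarith))
  rw [Real.sqrt_mul' _ (sq_nonneg D), Real.sqrt_sq hD] at this
  linarith

theorem sq_mul_sub_le_of_cubic_stationary {E : Type*} [NormedAddCommGroup E]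
    [InnerProductSpace ℝ E] {H G : E →L[ℝ] E} {g d s : E} {a b c : ℝ}
    (hH : 0 ≤ ⟪s + d, H (s + d)⟫) (hg : ‖g - H d‖ ≤ a) (hGH : ‖G - H‖ ≤ b) (hc : 0 ≤ c)
    (hstat : g + G s + (c * ‖s‖) • s = 0) :
    c * ‖s‖ ^ 2 * (‖s‖ - ‖d‖) ≤ (‖s‖ + ‖d‖) * (a + b * ‖s‖) := by
  set v := s + d
  have hHv : H v = -(c * ‖s‖) • s - (g - H d) - (G - H) s := by
    simp only [v, map_add, sub_apply, neg_smul]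
    rw [← sub_eq_zero, ← hstat]; abel
  have hvs : ‖s‖ ^ 2 - ‖d‖ * ‖s‖ ≤ ⟪v, s⟫ := by
    rw [inner_add_left, real_inner_self_eq_norm_sq]
    linarith [neg_abs_le ⟪d, s⟫, abs_real_inner_le_norm d s]
  have hv : ‖v‖ ≤ ‖s‖ + ‖d‖ := norm_add_le s d
  have hrem : -(⟪v, g - H d⟫ + ⟪v, (G - H) s⟫) ≤ ‖v‖ * (a + b * ‖s‖) := by
    have h1 : -⟪v, g - H d⟫ ≤ ‖v‖ * a := (neg_le_abs _).trans
      ((abs_real_inner_le_norm _ _).trans (by gcongr))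
    have h2 : -⟪v, (G - H) s⟫ ≤ ‖v‖ * (b * ‖s‖) := (neg_le_abs _).trans
      ((abs_real_inner_le_norm _ _).trans (by gcongr; exact (G - H).le_of_opNorm_le hGH s))
    linarith
  have hab : 0 ≤ a + b * ‖s‖ := add_nonneg ((norm_nonneg _).trans hg)
    (mul_nonneg ((norm_nonneg _).trans hGH) (norm_nonneg s))
  rw [hHv, inner_sub_right, inner_sub_right, real_inner_smul_right] at hH
  calc c * ‖s‖ ^ 2 * (‖s‖ - ‖d‖) = c * ‖s‖ * (‖s‖ ^ 2 - ‖d‖ * ‖s‖) := by ring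
    _ ≤ c * ‖s‖ * ⟪v, s⟫ := by gcongr
    _ ≤ ‖v‖ * (a + b * ‖s‖) := by linarith
    _ ≤ (‖s‖ + ‖d‖) * (a + b * ‖s‖) := by gcongr

theorem ContDiff.gradient {F : Type*} [NormedAddCommGroup F] [InnerProductSpace ℝ F]
    [CompleteSpace F] {f : F → ℝ} {n : WithTop ℕ∞} (hf : ContDiff ℝ (n + 1) f) :
    ContDiff ℝ n (gradient f) :=
  (InnerProductSpace.toDual ℝ F).symm.contDiff.comp (hf.fderiv_right le_rfl)

theorem stmt3_general {n : ℕ} (f : EuclideanSpace ℝ (Fin n) → ℝ)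
    (F : Set (EuclideanSpace ℝ (Fin n))) (L σ : ℝ)
    (x xhat xplus : EuclideanSpace ℝ (Fin n))
    (hf : ContDiff ℝ 2 f) (hF : Convex ℝ F) (hσ : 0 < σ)
    (hx : x ∈ F) (hxhat : xhat ∈ F)
    (hLip : ∀ z ∈ F, ∀ w ∈ F,
      ‖fderiv ℝ (gradient f) z - fderiv ℝ (gradient f) w‖ ≤ L * ‖z - w‖)
    (hgrad : gradient f xhat = 0)
    (hpsd : ∀ v, 0 ≤ ⟪v, (fderiv ℝ (gradient f) xhat) v⟫)
    (hstat : gradient f x + (fderiv ℝ (gradient f) x) (xplus - x)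
        + (σ / 2 * ‖xplus - x‖) • (xplus - x) = 0) :
    ‖xplus - x‖ ≤ (1 + L / σ + Real.sqrt ((1 + L / σ) ^ 2 + L / σ)) * ‖x - xhat‖ := by
  have hHess : ∀ y, HasFDerivAt (gradient f) (fderiv ℝ (gradient f) y) y := fun y =>
    ((hf.gradient (n := 1)).differentiable one_ne_zero y).hasFDerivAt
  have hTaylor : ‖gradient f x - fderiv ℝ (gradient f) xhat (x - xhat)‖
      ≤ L / 2 * ‖x - xhat‖ ^ 2 := by
    simpa [hgrad] using norm_sub_sub_fderiv_le_of_lipschitz_fderiv hF hxhat hx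
      (fun y _ => hHess y) (fun y hy => hLip y hy xhat hxhat)
  have hstep := sq_mul_sub_le_of_cubic_stationary (hpsd _) hTaylor (hLip x hx xhat hxhat)
    (by positivity) hstat
  refine le_mul_of_sq_mul_sub_le (norm_nonneg _) (norm_nonneg _) ?_
  rw [← mul_le_mul_iff_of_pos_left (half_pos hσ)]
  refine (le_of_eq (by ring)).trans (hstep.trans (le_of_eq ?_))
  field_simp

theorem stmt3 {n : ℕ} (f : EuclideanSpace ℝ (Fin n) → ℝ)
    (F : Set (EuclideanSpace ℝ (Fin n))) (L σ : ℝ)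
    (x xhat xplus : EuclideanSpace ℝ (Fin n))
    (hf : ContDiff ℝ 2 f) (hF : Convex ℝ F) (hL : 0 < L) (hσ : 0 < σ)
    (hx : x ∈ F) (hxhat : xhat ∈ F) (hxplus : xplus ∈ F)
    (hLip : ∀ z ∈ F, ∀ w ∈ F,
      ‖fderiv ℝ (gradient f) z - fderiv ℝ (gradient f) w‖ ≤ L * ‖z - w‖)
    (hgrad : gradient f xhat = 0)
    (hpsd : ∀ v, 0 ≤ ⟪v, (fderiv ℝ (gradient f) xhat) v⟫)
    (hstat : gradient f x + (fderiv ℝ (gradient f) x) (xplus - x)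
        + (σ / 2 * ‖xplus - x‖) • (xplus - x) = 0) :
    ‖xplus - x‖ ≤ (1 + L / σ + Real.sqrt ((1 + L / σ) ^ 2 + L / σ)) * ‖x - xhat‖ :=
  stmt3_general f F L σ x xhat xplus hf hF hσ hx hxhat hLip hgrad hpsd hstat
end

section
/- Let A₁, …, A_m ∈ ℝ^{n×n} and suppose the linear map 𝒜(X) = (⟨A_i, X⟩)_{i=1}^m satisfies the (2r, δ)-restricted isometry property: (1−δ)‖X‖_F² ≤ (1/m)∑ᵢ⟨Aᵢ, X⟩² ≤ (1+δ)‖X‖_F² for all X of rank at most 2r. Then for all X, Y ∈ ℝ^{n×n} with rank(X), rank(Y) ≤ r, |(1/m)∑ᵢ⟨Aᵢ, X⟩⟨Aᵢ, Y⟩ − ⟨X, Y⟩| ≤ δ‖X‖_F‖Y‖_F. -/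
open Matrix

noncomputable def frobInner {n : ℕ} (A B : Matrix (Fin n) (Fin n) ℝ) : ℝ :=
  ∑ i, ∑ j, A i j * B i j

noncomputable def frobNorm {n : ℕ} (A : Matrix (Fin n) (Fin n) ℝ) : ℝ :=
  Real.sqrt (∑ i, ∑ j, (A i j) ^ 2)

lemma frobInner_self {n : ℕ} (X : Matrix (Fin n) (Fin n) ℝ) :
    frobInner X X = frobNorm X ^ 2 := by
  rw [frobNorm, Real.sq_sqrt (by positivity)]
  simp [frobInner, sq]

lemma frobNorm_nonneg {n : ℕ} (X : Matrix (Fin n) (Fin n) ℝ) : 0 ≤ frobNorm X :=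
  Real.sqrt_nonneg _

lemma frobInner_add_right {n : ℕ} (A X Y : Matrix (Fin n) (Fin n) ℝ) :
    frobInner A (X + Y) = frobInner A X + frobInner A Y := by
  simp [frobInner, mul_add, Finset.sum_add_distrib]

lemma frobInner_sub_right {n : ℕ} (A X Y : Matrix (Fin n) (Fin n) ℝ) :
    frobInner A (X - Y) = frobInner A X - frobInner A Y := by
  simp [frobInner, mul_sub, Finset.sum_sub_distrib]

lemma frobInner_smul_right {n : ℕ} (c : ℝ) (A X : Matrix (Fin n) (Fin n) ℝ) :
    frobInner A (c • X) = c * frobInner A X := by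
  simp [frobInner, Finset.mul_sum, mul_left_comm]

lemma frobInner_comm {n : ℕ} (X Y : Matrix (Fin n) (Fin n) ℝ) :
    frobInner X Y = frobInner Y X := by
  simp [frobInner, mul_comm]

lemma frobInner_smul_left {n : ℕ} (c : ℝ) (X Y : Matrix (Fin n) (Fin n) ℝ) :
    frobInner (c • X) Y = c * frobInner X Y := by
  rw [frobInner_comm, frobInner_smul_right, frobInner_comm]

lemma frobInner_add_left {n : ℕ} (X Y Z : Matrix (Fin n) (Fin n) ℝ) :
    frobInner (X + Y) Z = frobInner X Z + frobInner Y Z := by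
  rw [frobInner_comm, frobInner_add_right, frobInner_comm Z, frobInner_comm Z]

lemma frobNorm_sq_add {n : ℕ} (X Y : Matrix (Fin n) (Fin n) ℝ) :
    frobNorm (X + Y) ^ 2 = frobNorm X ^ 2 + 2 * frobInner X Y + frobNorm Y ^ 2 := by
  rw [← frobInner_self, ← frobInner_self, ← frobInner_self, frobInner_add_right,
    frobInner_add_left, frobInner_add_left, frobInner_comm Y X]
  ring

lemma frobNorm_sq_smul {n : ℕ} (c : ℝ) (X : Matrix (Fin n) (Fin n) ℝ) :
    frobNorm (c • X) ^ 2 = c ^ 2 * frobNorm X ^ 2 := by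
  rw [← frobInner_self, ← frobInner_self, frobInner_smul_left, frobInner_smul_right]; ring

lemma frobNorm_sq_sub {n : ℕ} (X Y : Matrix (Fin n) (Fin n) ℝ) :
    frobNorm (X - Y) ^ 2 = frobNorm X ^ 2 - 2 * frobInner X Y + frobNorm Y ^ 2 := by
  have h : X - Y = X + (-1 : ℝ) • Y := by simp [sub_eq_add_neg]
  rw [h, frobNorm_sq_add, frobInner_smul_right, frobNorm_sq_smul]; ring

lemma frobNorm_pos {n : ℕ} (X : Matrix (Fin n) (Fin n) ℝ) (hX : X ≠ 0) :
    0 < frobNorm X := by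
  rcases (frobNorm_nonneg X).lt_or_eq with h | h
  · exact h
  exfalso; apply hX
  have h2 : ∑ i, ∑ j, (X i j) ^ 2 = 0 := by
    have := congrArg (· ^ 2) h.symm
    simpa [frobNorm, Real.sq_sqrt (show (0:ℝ) ≤ ∑ i, ∑ j, (X i j)^2 by positivity)] using this
  ext i j
  have hi := (Finset.sum_eq_zero_iff_of_nonneg (fun i _ => by positivity)).mp h2 i (by simp)
  have hij := (Finset.sum_eq_zero_iff_of_nonneg (fun j _ => by positivity)).mp hi j (by simp)
  simpa using pow_eq_zero_iff (n := 2) (by norm_num) |>.mp hij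

lemma rank_add_le' {n : ℕ} (X Y : Matrix (Fin n) (Fin n) ℝ) :
    (X + Y).rank ≤ X.rank + Y.rank := by
  unfold Matrix.rank
  have hle : LinearMap.range (X + Y).mulVecLin ≤
      LinearMap.range X.mulVecLin ⊔ LinearMap.range Y.mulVecLin := by
    rintro v ⟨w, rfl⟩
    rw [Matrix.mulVecLin_add]
    exact Submodule.add_mem_sup ⟨w, rfl⟩ ⟨w, rfl⟩
  exact (Submodule.finrank_mono hle).trans
    (Submodule.finrank_add_le_finrank_add_finrank _ _)

lemma rank_smul_le' {n : ℕ} (c : ℝ) (X : Matrix (Fin n) (Fin n) ℝ) :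
    (c • X).rank ≤ X.rank := by
  unfold Matrix.rank
  apply Submodule.finrank_mono
  rintro v ⟨w, rfl⟩
  exact ⟨c • w, by
    simp [Matrix.mulVecLin_apply, Matrix.mulVec_smul, Matrix.smul_mulVec]⟩

lemma rank_neg_le' {n : ℕ} (X : Matrix (Fin n) (Fin n) ℝ) : (-X).rank ≤ X.rank := by
  have : (-X) = (-1 : ℝ) • X := by simp
  rw [this]; exact rank_smul_le' _ _

theorem stmt14 {m n r : ℕ} (hm : 0 < m) (δ : ℝ) (hδ0 : 0 < δ) (hδ1 : δ < 1)
    (A : Fin m → Matrix (Fin n) (Fin n) ℝ)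
    (hRIP : ∀ X : Matrix (Fin n) (Fin n) ℝ, X.rank ≤ 2 * r →
      (1 - δ) * frobNorm X ^ 2 ≤ (1 / (m : ℝ)) * ∑ k, (frobInner (A k) X) ^ 2 ∧
      (1 / (m : ℝ)) * ∑ k, (frobInner (A k) X) ^ 2 ≤ (1 + δ) * frobNorm X ^ 2) :
    ∀ X Y : Matrix (Fin n) (Fin n) ℝ, X.rank ≤ r → Y.rank ≤ r →
      |(1 / (m : ℝ)) * ∑ k, frobInner (A k) X * frobInner (A k) Y - frobInner X Y|
        ≤ δ * frobNorm X * frobNorm Y := by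
  -- core estimate
  have core : ∀ X Y : Matrix (Fin n) (Fin n) ℝ, X.rank ≤ r → Y.rank ≤ r →
      |(1 / (m : ℝ)) * ∑ k, frobInner (A k) X * frobInner (A k) Y - frobInner X Y|
        ≤ δ / 2 * (frobNorm X ^ 2 + frobNorm Y ^ 2) := by
    intro X Y hX hY
    have hrs : (X + Y).rank ≤ 2 * r :=
      (rank_add_le' X Y).trans (by omega)
    have hrd : (X - Y).rank ≤ 2 * r := by
      rw [sub_eq_add_neg]
      exact (rank_add_le' X (-Y)).trans (by have := rank_neg_le' Y; omega)
    obtain ⟨hS1, hS2⟩ := hRIP (X + Y) hrs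
    obtain ⟨hD1, hD2⟩ := hRIP (X - Y) hrd
    set S := (1 / (m : ℝ)) * ∑ k, (frobInner (A k) (X + Y)) ^ 2 with hSdef
    set D := (1 / (m : ℝ)) * ∑ k, (frobInner (A k) (X - Y)) ^ 2 with hDdef
    have hB : (1 / (m : ℝ)) * ∑ k, frobInner (A k) X * frobInner (A k) Y
        = (S - D) / 4 := by
      rw [hSdef, hDdef]
      have : ∀ k, frobInner (A k) X * frobInner (A k) Y
          = ((frobInner (A k) (X + Y)) ^ 2 - (frobInner (A k) (X - Y)) ^ 2) / 4 := by
        intro k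
        rw [frobInner_add_right, frobInner_sub_right]; ring
      rw [Finset.sum_congr rfl (fun k _ => this k), ← Finset.sum_div,
        Finset.sum_sub_distrib]
      ring
    have hI : frobInner X Y = (frobNorm (X + Y) ^ 2 - frobNorm (X - Y) ^ 2) / 4 := by
      rw [frobNorm_sq_add, frobNorm_sq_sub]; ring
    rw [hB, hI]
    have h1 : |S - frobNorm (X + Y) ^ 2| ≤ δ * frobNorm (X + Y) ^ 2 := by
      rw [abs_le]; constructor <;> nlinarith
    have h2 : |D - frobNorm (X - Y) ^ 2| ≤ δ * frobNorm (X - Y) ^ 2 := by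
      rw [abs_le]; constructor <;> nlinarith
    have hpar : frobNorm (X + Y) ^ 2 + frobNorm (X - Y) ^ 2
        = 2 * frobNorm X ^ 2 + 2 * frobNorm Y ^ 2 := by
      rw [frobNorm_sq_add, frobNorm_sq_sub]; ring
    have e : (S - D) / 4 - (frobNorm (X + Y) ^ 2 - frobNorm (X - Y) ^ 2) / 4
        = ((S - frobNorm (X + Y) ^ 2) - (D - frobNorm (X - Y) ^ 2)) / 4 := by ring
    rw [e]
    calc |((S - frobNorm (X + Y) ^ 2) - (D - frobNorm (X - Y) ^ 2)) / 4|
        = |(S - frobNorm (X + Y) ^ 2) - (D - frobNorm (X - Y) ^ 2)| / 4 := by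
          rw [abs_div]; norm_num
      _ ≤ (|S - frobNorm (X + Y) ^ 2| + |D - frobNorm (X - Y) ^ 2|) / 4 := by
          gcongr; exact abs_sub _ _
      _ ≤ (δ * frobNorm (X + Y) ^ 2 + δ * frobNorm (X - Y) ^ 2) / 4 := by gcongr
      _ = δ / 2 * (frobNorm X ^ 2 + frobNorm Y ^ 2) := by
          rw [show δ * frobNorm (X + Y) ^ 2 + δ * frobNorm (X - Y) ^ 2
            = δ * (frobNorm (X + Y) ^ 2 + frobNorm (X - Y) ^ 2) by ring, hpar]; ring
  intro X Y hX hY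
  by_cases hX0 : X = 0
  · subst hX0
    simp [frobInner, frobNorm]
  by_cases hY0 : Y = 0
  · subst hY0
    simp [frobInner, frobNorm]
  have hXp : 0 < frobNorm X := frobNorm_pos X hX0
  have hYp : 0 < frobNorm Y := frobNorm_pos Y hY0
  set t : ℝ := Real.sqrt (frobNorm Y / frobNorm X) with ht
  have htp : 0 < t := Real.sqrt_pos.mpr (by positivity)
  have ht2 : t ^ 2 = frobNorm Y / frobNorm X := Real.sq_sqrt (by positivity)
  have hXr : (t • X).rank ≤ r := (rank_smul_le' t X).trans hX
  have hYr : (t⁻¹ • Y).rank ≤ r := (rank_smul_le' t⁻¹ Y).trans hY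
  have key := core (t • X) (t⁻¹ • Y) hXr hYr
  have hBeq : ∀ k, frobInner (A k) (t • X) * frobInner (A k) (t⁻¹ • Y)
      = frobInner (A k) X * frobInner (A k) Y := by
    intro k
    rw [frobInner_smul_right, frobInner_smul_right]
    field_simp
  have hIeq : frobInner (t • X) (t⁻¹ • Y) = frobInner X Y := by
    rw [frobInner_smul_left, frobInner_smul_right]
    field_simp
  rw [Finset.sum_congr rfl (fun k _ => hBeq k), hIeq, frobNorm_sq_smul,
    frobNorm_sq_smul, ht2] at key
  have hrhs : δ / 2 * (frobNorm Y / frobNorm X * frobNorm X ^ 2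
      + (t⁻¹) ^ 2 * frobNorm Y ^ 2) = δ * frobNorm X * frobNorm Y := by
    have hinv : (t⁻¹) ^ 2 = frobNorm X / frobNorm Y := by
      rw [inv_pow, ht2]
      field_simp
    rw [hinv]
    field_simp
    ring
  rw [hrhs] at key
  exact key
end

section
/- Let a₁, …, a_m ∈ ℂⁿ with M = maxⱼ‖aⱼ‖, A = (a₁, …, a_m) ∈ ℂ^{n×m}, and suppose λ_max(AAᴴ) ≤ 2m and (1/m)∑ⱼ| |aⱼᴴw|² − |aⱼᴴw′|² | ≤ (3/2)‖w − w′‖(‖w‖ + ‖w′‖) for all w, w′ ∈ ℂⁿ. Then for the function f_c(z) = (1/(2m))∑ⱼ(|aⱼᴴz|² − bⱼ²)², its Wirtinger Hessian satisfies ‖∇²_w f_c(w) − ∇²_w f_c(w′)‖ ≤ 20M²R‖w − w′‖ for all w, w′ with ‖w‖, ‖w′‖ ≤ R. -/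
/-- `aᴴz` for vectors in `ℂⁿ`, i.e. the complex inner product `⟪a, z⟫`. -/
noncomputable def cip {n : ℕ} (a z : EuclideanSpace ℂ (Fin n)) : ℂ :=
  inner ℂ a z

/-- The Wirtinger-Hessian quadratic form of the phase-retrieval objective
`f_c(z) = (1/(2m)) ∑ⱼ (|aⱼᴴz|² − bⱼ²)²` at `z`, evaluated at the direction `(v, v̄)`:
`(v, v̄)ᴴ ∇²_w f_c(z) (v, v̄)`. -/
noncomputable def wirtingerQuadForm {m n : ℕ} (a : Fin m → EuclideanSpace ℂ (Fin n))
    (b : Fin m → ℝ) (z v : EuclideanSpace ℂ (Fin n)) : ℝ :=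
  (2 / (m : ℝ)) * ∑ j, ((2 * ‖cip (a j) z‖ ^ 2 - (b j) ^ 2) * ‖cip (a j) v‖ ^ 2
    + ((cip (a j) z) ^ 2 * (starRingEnd ℂ) ((cip (a j) v) ^ 2)).re)

/-!
Writing `xⱼ = aⱼᴴw`, `xⱼ' = aⱼᴴw'`, `yⱼ = aⱼᴴv`, the `j`-th summand of the difference of the
two quadratic forms is `2(|xⱼ|² − |xⱼ'|²)|yⱼ|² + Re((xⱼ − xⱼ')(xⱼ + xⱼ') ȳⱼ²)`. The first part is
controlled by `|yⱼ|² ≤ M²` and the concentration hypothesis, the second by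
`|xⱼ − xⱼ'| ≤ M‖w − w'‖`, `|xⱼ + xⱼ'| ≤ 2MR` and the bound `λ_max(AAᴴ) ≤ 2m`; this gives
`12 M²R‖w − w'‖ + 8 M²R‖w − w'‖`.
-/

open ComplexConjugate

noncomputable def quadSummand (β : ℝ) (x y : ℂ) : ℝ :=
  (2 * ‖x‖ ^ 2 - β ^ 2) * ‖y‖ ^ 2 + (x ^ 2 * conj (y ^ 2)).re

lemma wirtingerQuadForm_eq_sum {m n : ℕ} (a : Fin m → EuclideanSpace ℂ (Fin n))
    (b : Fin m → ℝ) (z v : EuclideanSpace ℂ (Fin n)) :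
    wirtingerQuadForm a b z v =
      (2 / (m : ℝ)) * ∑ j, quadSummand (b j) (cip (a j) z) (cip (a j) v) :=
  rfl

lemma abs_quadSummand_sub_le (β : ℝ) (x x' y : ℂ) :
    |quadSummand β x y - quadSummand β x' y|
      ≤ (2 * |‖x‖ ^ 2 - ‖x'‖ ^ 2| + ‖x - x'‖ * (‖x‖ + ‖x'‖)) * ‖y‖ ^ 2 := by
  have hsub : quadSummand β x y - quadSummand β x' y
      = 2 * (‖x‖ ^ 2 - ‖x'‖ ^ 2) * ‖y‖ ^ 2 + ((x - x') * (x + x') * conj (y ^ 2)).re := by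
    simp only [quadSummand]
    rw [show (x - x') * (x + x') = x ^ 2 - x' ^ 2 by ring, sub_mul (x ^ 2), Complex.sub_re]
    ring
  have hre : |((x - x') * (x + x') * conj (y ^ 2)).re| ≤ ‖x - x'‖ * (‖x‖ + ‖x'‖) * ‖y‖ ^ 2 :=
    calc |((x - x') * (x + x') * conj (y ^ 2)).re|
        ≤ ‖x - x'‖ * ‖x + x'‖ * ‖y‖ ^ 2 := by
          refine (Complex.abs_re_le_norm _).trans_eq ?_
          rw [norm_mul, norm_mul, Complex.norm_conj, norm_pow]
      _ ≤ ‖x - x'‖ * (‖x‖ + ‖x'‖) * ‖y‖ ^ 2 := by gcongr; exact norm_add_le x x'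
  calc |quadSummand β x y - quadSummand β x' y|
      ≤ 2 * |‖x‖ ^ 2 - ‖x'‖ ^ 2| * ‖y‖ ^ 2 + ‖x - x'‖ * (‖x‖ + ‖x'‖) * ‖y‖ ^ 2 := by
        rw [hsub]
        refine (abs_add_le _ _).trans (add_le_add (le_of_eq ?_) hre)
        rw [abs_mul, abs_mul, abs_two, abs_of_nonneg (sq_nonneg ‖y‖)]
    _ = _ := by ring

section

variable {n : ℕ} {a : EuclideanSpace ℂ (Fin n)} {M : ℝ}

lemma cip_sub_cip (a w w' : EuclideanSpace ℂ (Fin n)) :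
    cip a w - cip a w' = cip a (w - w') := by
  simp only [cip, inner_sub_right]

lemma norm_cip_le (ha : ‖a‖ ≤ M) (z : EuclideanSpace ℂ (Fin n)) : ‖cip a z‖ ≤ M * ‖z‖ :=
  (norm_inner_le_norm a z).trans (mul_le_mul_of_nonneg_right ha (norm_nonneg z))

lemma abs_quadSummand_cip_sub_le (ha : ‖a‖ ≤ M) (β : ℝ) (w w' v : EuclideanSpace ℂ (Fin n)) :
    |quadSummand β (cip a w) (cip a v) - quadSummand β (cip a w') (cip a v)|
      ≤ 2 * M ^ 2 * ‖v‖ ^ 2 * |‖cip a w‖ ^ 2 - ‖cip a w'‖ ^ 2|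
        + M ^ 2 * ‖w - w'‖ * (‖w‖ + ‖w'‖) * ‖cip a v‖ ^ 2 := by
  have hM : 0 ≤ M := (norm_nonneg a).trans ha
  have hv : ‖cip a v‖ ^ 2 ≤ M ^ 2 * ‖v‖ ^ 2 := by
    rw [← mul_pow]; gcongr; exact norm_cip_le ha v
  have hdiff : ‖cip a w - cip a w'‖ ≤ M * ‖w - w'‖ := by
    rw [cip_sub_cip]; exact norm_cip_le ha _
  have hsum : ‖cip a w‖ + ‖cip a w'‖ ≤ M * (‖w‖ + ‖w'‖) := by
    rw [mul_add]; exact add_le_add (norm_cip_le ha w) (norm_cip_le ha w')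
  calc _ ≤ 2 * |‖cip a w‖ ^ 2 - ‖cip a w'‖ ^ 2| * ‖cip a v‖ ^ 2
          + ‖cip a w - cip a w'‖ * (‖cip a w‖ + ‖cip a w'‖) * ‖cip a v‖ ^ 2 := by
        rw [← add_mul]; exact abs_quadSummand_sub_le _ _ _ _
    _ ≤ 2 * |‖cip a w‖ ^ 2 - ‖cip a w'‖ ^ 2| * (M ^ 2 * ‖v‖ ^ 2)
          + (M * ‖w - w'‖) * (M * (‖w‖ + ‖w'‖)) * ‖cip a v‖ ^ 2 := by
        gcongr
    _ = _ := by ring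

end

lemma abs_wirtingerQuadForm_sub_le {m n : ℕ} (a : Fin m → EuclideanSpace ℂ (Fin n))
    (b : Fin m → ℝ) {M : ℝ} (hM : ∀ j, ‖a j‖ ≤ M) (w w' v : EuclideanSpace ℂ (Fin n)) :
    |wirtingerQuadForm a b w v - wirtingerQuadForm a b w' v|
      ≤ 4 * M ^ 2 * ‖v‖ ^ 2 * ((1 / (m : ℝ)) * ∑ j, |‖cip (a j) w‖ ^ 2 - ‖cip (a j) w'‖ ^ 2|)
        + 2 * M ^ 2 * ‖w - w'‖ * (‖w‖ + ‖w'‖) * ((1 / (m : ℝ)) * ∑ j, ‖cip (a j) v‖ ^ 2) := by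
  rw [wirtingerQuadForm_eq_sum, wirtingerQuadForm_eq_sum, ← mul_sub, ← Finset.sum_sub_distrib,
    abs_mul, abs_of_nonneg (by positivity)]
  calc _ ≤ (2 / (m : ℝ)) * ∑ j, (2 * M ^ 2 * ‖v‖ ^ 2 * |‖cip (a j) w‖ ^ 2 - ‖cip (a j) w'‖ ^ 2|
          + M ^ 2 * ‖w - w'‖ * (‖w‖ + ‖w'‖) * ‖cip (a j) v‖ ^ 2) := by
        gcongr
        exact (Finset.abs_sum_le_sum_abs _ _).trans
          (Finset.sum_le_sum fun j _ => abs_quadSummand_cip_sub_le (hM j) _ _ _ _)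
    _ = _ := by
        rw [Finset.sum_add_distrib, ← Finset.mul_sum, ← Finset.mul_sum]
        ring

theorem stmt19_general {m n : ℕ}
    (a : Fin m → EuclideanSpace ℂ (Fin n)) (b : Fin m → ℝ)
    (M R : ℝ) (hM : ∀ j, ‖a j‖ ≤ M)
    (hmax : ∀ v : EuclideanSpace ℂ (Fin n),
      (1 / (m : ℝ)) * ∑ j, ‖cip (a j) v‖ ^ 2 ≤ 2 * ‖v‖ ^ 2)
    (hconc : ∀ w w' : EuclideanSpace ℂ (Fin n),
      (1 / (m : ℝ)) * ∑ j, |‖cip (a j) w‖ ^ 2 - ‖cip (a j) w'‖ ^ 2|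
        ≤ 3 / 2 * ‖w - w'‖ * (‖w‖ + ‖w'‖)) :
    ∀ w w' v : EuclideanSpace ℂ (Fin n), ‖w‖ ≤ R → ‖w'‖ ≤ R → ‖v‖ = 1 →
      |wirtingerQuadForm a b w v - wirtingerQuadForm a b w' v|
        ≤ 20 * M ^ 2 * R * ‖w - w'‖ := by
  intro w w' v hw hw' hv
  have hwR : ‖w‖ + ‖w'‖ ≤ 2 * R := by linarith
  calc _ ≤ 4 * M ^ 2 * ‖v‖ ^ 2 * (3 / 2 * ‖w - w'‖ * (‖w‖ + ‖w'‖))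
          + 2 * M ^ 2 * ‖w - w'‖ * (‖w‖ + ‖w'‖) * (2 * ‖v‖ ^ 2) := by
        refine (abs_wirtingerQuadForm_sub_le a b hM w w' v).trans ?_
        have hM2 : 0 ≤ M ^ 2 := sq_nonneg M
        exact add_le_add (mul_le_mul_of_nonneg_left (hconc w w') (by positivity))
          (mul_le_mul_of_nonneg_left (hmax v) (by positivity))
    _ = 10 * M ^ 2 * ‖w - w'‖ * (‖w‖ + ‖w'‖) := by rw [hv]; ring
    _ ≤ 10 * M ^ 2 * ‖w - w'‖ * (2 * R) := by gcongr
    _ = 20 * M ^ 2 * R * ‖w - w'‖ := by ring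

theorem stmt19 {m n : ℕ} (hm : 0 < m)
    (a : Fin m → EuclideanSpace ℂ (Fin n)) (b : Fin m → ℝ)
    (M R : ℝ) (hM : ∀ j, ‖a j‖ ≤ M) (hR : 0 < R)
    (hmax : ∀ v : EuclideanSpace ℂ (Fin n),
      (1 / (m : ℝ)) * ∑ j, ‖cip (a j) v‖ ^ 2 ≤ 2 * ‖v‖ ^ 2)
    (hconc : ∀ w w' : EuclideanSpace ℂ (Fin n),
      (1 / (m : ℝ)) * ∑ j, |‖cip (a j) w‖ ^ 2 - ‖cip (a j) w'‖ ^ 2|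
        ≤ 3 / 2 * ‖w - w'‖ * (‖w‖ + ‖w'‖)) :
    ∀ w w' v : EuclideanSpace ℂ (Fin n), ‖w‖ ≤ R → ‖w'‖ ≤ R → ‖v‖ = 1 →
      |wirtingerQuadForm a b w v - wirtingerQuadForm a b w' v|
        ≤ 20 * M ^ 2 * R * ‖w - w'‖ :=
  stmt19_general a b M R hM hmax hconc
end
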